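/- Let H be a pencilled hfd line set in PG(5,K). Then a point p of PG(5,K) (a 1-dimensional subspace of V) is a vertex of H if and only if p ≤ κ for every carrier plane κ of H; equivalently, the union of the vertices of H equals the intersection of all carrier planes of H. -/

import Mathlib

/-- The Klein quadratic form on `K^6`. -/
def kleinQ {K : Type*} [Field K] (x : Fin 6 → K) : K :=
  x 0 * x 1 + x 2 * x 3 + x 4 * x 5

/-- The polar bilinear form `B(x,y) = Q(x+y) - Q(x) - Q(y)`. -/
def kleinB {K : Type*} [Field K] (x y : Fin 6 → K) : K :=
  kleinQ (x + y) - kleinQ x - kleinQ y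

/-- The polar subspace `π₅(S)` of a subspace `S`. -/
def kleinPolar {K : Type*} [Field K] (S : Submodule K (Fin 6 → K)) :
    Submodule K (Fin 6 → K) where
  carrier := {y | ∀ s ∈ S, kleinB s y = 0}
  add_mem' := by
    intro a b ha hb s hs
    have h1 := ha s hs
    have h2 := hb s hs
    simp only [kleinB, kleinQ, Pi.add_apply] at *
    linear_combination h1 + h2
  zero_mem' := by
    intro s hs
    simp [kleinB, kleinQ]
  smul_mem' := by
    intro c a ha s hs
    have h1 := ha s hs
    simp only [kleinB, kleinQ, Pi.add_apply, Pi.smul_apply, smul_eq_mul] at *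
    linear_combination c * h1

/-- `τ` is a tangent hyperplane of the Klein quadric. -/
def IsTangentHyperplane {K : Type*} [Field K] (τ : Submodule K (Fin 6 → K)) : Prop :=
  ∃ x : Fin 6 → K, x ≠ 0 ∧ kleinQ x = 0 ∧ τ = kleinPolar (Submodule.span K {x})

/-- A subspace is external to the Klein quadric. -/
def IsExternal {K : Type*} [Field K] (S : Submodule K (Fin 6 → K)) : Prop :=
  ∀ s ∈ S, s ≠ 0 → kleinQ s ≠ 0

/-- A `0`-secant of the Klein quadric: an external line. -/
def IsSecant {K : Type*} [Field K] (G : Submodule K (Fin 6 → K)) : Prop :=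
  Module.finrank K G = 2 ∧ IsExternal G

/-- The pencil of lines with vertex `v` and carrier plane `κ`. -/
def pencil {K : Type*} [Field K] (v κ : Submodule K (Fin 6 → K)) :
    Set (Submodule K (Fin 6 → K)) :=
  {X | Module.finrank K X = 2 ∧ v ≤ X ∧ X ≤ κ}

/-- An hfd line set: a set of `0`-secants such that every tangent hyperplane
contains exactly one member. -/
def IsHfd {K : Type*} [Field K] (H : Set (Submodule K (Fin 6 → K))) : Prop :=
  (∀ G ∈ H, IsSecant G) ∧
    ∀ τ : Submodule K (Fin 6 → K), IsTangentHyperplane τ → ∃! G, G ∈ H ∧ G ≤ τ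

/-- A pencilled hfd line set: every member lies in a pencil entirely contained in `H`. -/
def IsPencilledHfd {K : Type*} [Field K] (H : Set (Submodule K (Fin 6 → K))) : Prop :=
  IsHfd H ∧
    ∀ G ∈ H, ∃ v κ : Submodule K (Fin 6 → K), Module.finrank K v = 1 ∧
      Module.finrank K κ = 3 ∧ v ≤ κ ∧ pencil v κ ⊆ H ∧ G ∈ pencil v κ

/-- `v` is a vertex of the pencilled hfd line set `H`. -/
def IsVertex {K : Type*} [Field K] (H : Set (Submodule K (Fin 6 → K)))
    (v : Submodule K (Fin 6 → K)) : Prop :=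
  Module.finrank K v = 1 ∧ ∃ κ : Submodule K (Fin 6 → K),
    Module.finrank K κ = 3 ∧ v ≤ κ ∧ pencil v κ ⊆ H

/-- `κ` is a carrier plane of the pencilled hfd line set `H`. -/
def IsCarrier {K : Type*} [Field K] (H : Set (Submodule K (Fin 6 → K)))
    (κ : Submodule K (Fin 6 → K)) : Prop :=
  Module.finrank K κ = 3 ∧ ∃ v : Submodule K (Fin 6 → K),
    Module.finrank K v = 1 ∧ v ≤ κ ∧ pencil v κ ⊆ H

/-! Two pencils of `H` with vertices `v` and `u` have lines in a common tangent hyperplane through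
`v` and `u`; by uniqueness these lines coincide, so every vertex lies in every carrier plane.
Conversely, let `p` lie in every carrier plane. If there is only one carrier plane `κ`, every line
`Y` of `κ` through `p` lies in some tangent hyperplane `τ`, and the line of `H` in `τ` is
`κ ⊓ τ = Y`. Otherwise the intersection `L` of two carrier planes is the line joining two vertices;
it belongs to `H`, so `p` is external, and a tangent hyperplane meeting `L` exactly in `p` forces
the vertex of its line in `H` to be `p`. Such a hyperplane exists because the isotropic vectors
of `p^⊥` span `p^⊥`. -/

open Module Submodule

section Dimension

variable {K V : Type*} [Field K] [AddCommGroup V] [Module K V] [FiniteDimensional K V]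

lemma exists_eq_span_singleton_of_finrank_eq_one {p : Submodule K V} (hp : finrank K p = 1) :
    ∃ a ≠ 0, p = K ∙ a := by
  obtain ⟨a, ha, ha₀⟩ := (Submodule.ne_bot_iff p).1 (Submodule.one_le_finrank_iff.1 hp.ge)
  refine ⟨a, ha₀, (eq_of_le_of_finrank_eq ((span_singleton_le_iff_mem _ _).2 ha) ?_).symm⟩
  rw [hp, finrank_span_singleton ha₀]

lemma finrank_add_finrank_le_finrank_inf_add (S T : Submodule K V) :
    finrank K S + finrank K T ≤ finrank K ↥(S ⊓ T) + finrank K V := by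
  have := Submodule.finrank_sup_add_finrank_inf_eq S T
  have := Submodule.finrank_le (S ⊔ T)
  omega

lemma finrank_inf_lt_of_not_le {S T : Submodule K V} (h : ¬ S ≤ T) :
    finrank K ↥(S ⊓ T) < finrank K S :=
  Submodule.finrank_lt_finrank_of_lt (inf_lt_left.2 h)

lemma finrank_sup_eq_two {u v : Submodule K V} (hu : finrank K u = 1) (hv : finrank K v = 1)
    (huv : u ≠ v) : finrank K ↥(u ⊔ v) = 2 := by
  have huv' : ¬ u ≤ v := fun h => huv (eq_of_le_of_finrank_eq h (by rw [hu, hv]))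
  have := finrank_inf_lt_of_not_le huv'
  have := Submodule.finrank_sup_add_finrank_inf_eq u v
  omega

end Dimension

section KleinQuadric

variable {K : Type*} [Field K]

lemma kleinB_apply (x y : Fin 6 → K) :
    kleinB x y = x 0 * y 1 + x 1 * y 0 + x 2 * y 3 + x 3 * y 2 + x 4 * y 5 + x 5 * y 4 := by
  simp only [kleinB, kleinQ, Pi.add_apply]
  ring

lemma kleinB_comm (x y : Fin 6 → K) : kleinB x y = kleinB y x := by
  simp only [kleinB_apply]
  ring

lemma kleinB_self (x : Fin 6 → K) : kleinB x x = 2 * kleinQ x := by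
  simp only [kleinQ, kleinB_apply]
  ring

lemma kleinQ_smul (c : K) (x : Fin 6 → K) : kleinQ (c • x) = c ^ 2 * kleinQ x := by
  simp only [kleinQ, Pi.smul_apply, smul_eq_mul]
  ring

lemma kleinQ_sub_smul (y w : Fin 6 → K) (t : K) :
    kleinQ (y - t • w) = kleinQ y + t ^ 2 * kleinQ w - t * kleinB y w := by
  simp only [kleinQ, kleinB_apply, Pi.sub_apply, Pi.smul_apply, smul_eq_mul]
  ring

lemma kleinQ_sub_smul_sub_smul (y w z : Fin 6 → K) (t s : K) :
    kleinQ (y - t • w - s • z) = kleinQ y + t ^ 2 * kleinQ w + s ^ 2 * kleinQ z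
      - t * kleinB y w - s * kleinB y z + t * s * kleinB w z := by
  simp only [kleinQ, kleinB_apply, Pi.sub_apply, Pi.smul_apply, smul_eq_mul]
  ring

variable (K) in
def kleinForm : LinearMap.BilinForm K (Fin 6 → K) :=
  LinearMap.mk₂ K kleinB
    (fun x y z => by simp only [kleinB_apply, Pi.add_apply]; ring)
    (fun c x y => by simp only [kleinB_apply, Pi.smul_apply, smul_eq_mul]; ring)
    (fun x y z => by simp only [kleinB_apply, Pi.add_apply]; ring)
    (fun c x y => by simp only [kleinB_apply, Pi.smul_apply, smul_eq_mul]; ring)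

@[simp] lemma kleinForm_apply (x y : Fin 6 → K) : kleinForm K x y = kleinB x y := rfl

lemma eq_zero_of_forall_isotropic_kleinB_eq_zero {x : Fin 6 → K}
    (h : ∀ y, kleinQ y = 0 → kleinB y x = 0) : x = 0 := by
  have h' (j : Fin 6) : kleinB (Pi.single j 1) x = 0 :=
    h _ (by fin_cases j <;> simp [kleinQ])
  funext i
  fin_cases i
  · simpa [kleinB_apply] using h' 1
  · simpa [kleinB_apply] using h' 0
  · simpa [kleinB_apply] using h' 3
  · simpa [kleinB_apply] using h' 2
  · simpa [kleinB_apply] using h' 5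
  · simpa [kleinB_apply] using h' 4

lemma kleinForm_isRefl : (kleinForm K).IsRefl := fun x y h => by
  rwa [kleinForm_apply, kleinB_comm, ← kleinForm_apply]

lemma kleinForm_nondegenerate : (kleinForm K).Nondegenerate := by
  refine ⟨fun x h => ?_, fun x h => ?_⟩
  · exact eq_zero_of_forall_isotropic_kleinB_eq_zero fun y _ => by
      rw [kleinB_comm]; exact h y
  · exact eq_zero_of_forall_isotropic_kleinB_eq_zero fun y _ => h y

lemma kleinPolar_eq_orthogonal (S : Submodule K (Fin 6 → K)) :
    kleinPolar S = (kleinForm K).orthogonal S := rfl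

lemma mem_kleinPolar_span_singleton {x y : Fin 6 → K} :
    y ∈ kleinPolar (K ∙ x) ↔ kleinB x y = 0 := by
  refine ⟨fun h => h x (mem_span_singleton_self x), fun h s hs => ?_⟩
  obtain ⟨c, rfl⟩ := mem_span_singleton.1 hs
  simpa [← kleinForm_apply] using Or.inr h

lemma le_kleinPolar_comm {S T : Submodule K (Fin 6 → K)} :
    S ≤ kleinPolar T ↔ T ≤ kleinPolar S :=
  ⟨fun h t ht s hs => by rw [kleinB_comm]; exact h hs t ht,
    fun h s hs t ht => by rw [kleinB_comm]; exact h ht s hs⟩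

lemma kleinPolar_kleinPolar (S : Submodule K (Fin 6 → K)) : kleinPolar (kleinPolar S) = S := by
  rw [kleinPolar_eq_orthogonal, kleinPolar_eq_orthogonal]
  exact LinearMap.BilinForm.orthogonal_orthogonal kleinForm_nondegenerate kleinForm_isRefl S

lemma kleinPolar_antitone : Antitone (kleinPolar (K := K)) :=
  fun _ _ h _ hy s hs => hy s (h hs)

lemma kleinPolar_le_kleinPolar_iff {S T : Submodule K (Fin 6 → K)} :
    kleinPolar S ≤ kleinPolar T ↔ T ≤ S := by
  refine ⟨fun h => ?_, fun h => kleinPolar_antitone h⟩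
  rw [← kleinPolar_kleinPolar S, ← kleinPolar_kleinPolar T]
  exact kleinPolar_antitone h

lemma finrank_add_finrank_kleinPolar (S : Submodule K (Fin 6 → K)) :
    finrank K S + finrank K (kleinPolar S) = 6 := by
  have := LinearMap.BilinForm.finrank_orthogonal kleinForm_nondegenerate S
  have hS := Submodule.finrank_le S
  rw [finrank_fin_fun] at this hS
  rw [kleinPolar_eq_orthogonal]
  omega

lemma exists_isotropic_mem {S : Submodule K (Fin 6 → K)} (hS : 4 ≤ finrank K S) :
    ∃ x ∈ S, x ≠ 0 ∧ kleinQ x = 0 := by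
  -- the coordinates `x 1 = x 3 = x 5 = 0` cut out a totally isotropic plane
  set f : (Fin 6 → K) →ₗ[K] (Fin 3 → K) := LinearMap.funLeft K K ![1, 3, 5]
  have hf : 3 ≤ finrank K (LinearMap.ker f) := by
    have := LinearMap.finrank_range_add_finrank_ker f
    have := Submodule.finrank_le (LinearMap.range f)
    rw [finrank_fin_fun] at *
    omega
  have hST := Submodule.finrank_sup_add_finrank_inf_eq S (LinearMap.ker f)
  have := Submodule.finrank_le (S ⊔ LinearMap.ker f)
  rw [finrank_fin_fun] at this
  obtain ⟨x, ⟨hxS, hxT⟩, hx⟩ := (Submodule.ne_bot_iff (S ⊓ LinearMap.ker f)).1 <| by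
    rw [← Submodule.one_le_finrank_iff]; omega
  have h1 : x 1 = 0 := congrFun hxT 0
  have h3 : x 3 = 0 := congrFun hxT 1
  have h5 : x 5 = 0 := congrFun hxT 2
  exact ⟨x, hxS, hx, by simp [kleinQ, h1, h3, h5]⟩

lemma le_of_forall_isotropic_mem {W U : Submodule K (Fin 6 → K)} {w z : Fin 6 → K}
    (hw : w ∈ W) (hz : z ∈ W) (hQw : kleinQ w = 0) (hQz : kleinQ z = 0) (hwz : kleinB w z = 1)
    (h : ∀ x ∈ W, kleinQ x = 0 → x ∈ U) : W ≤ U := by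
  intro y hy
  obtain ⟨s, hs⟩ : ∃ s, s = kleinB y w + 1 := ⟨_, rfl⟩
  obtain ⟨t, ht⟩ : ∃ t, t = s * kleinB y z - kleinQ y := ⟨_, rfl⟩
  have hx : kleinQ (y - t • w - s • z) = 0 := by
    rw [kleinQ_sub_smul_sub_smul, hQw, hQz, hwz, ht, hs]
    ring
  have hxW : y - t • w - s • z ∈ W := sub_mem (sub_mem hy (smul_mem _ t hw)) (smul_mem _ s hz)
  have hxU :=
    add_mem (add_mem (h _ hxW hx) (smul_mem _ t (h w hw hQw))) (smul_mem _ s (h z hz hQz))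
  convert hxU using 1
  abel

lemma exists_hyperbolic_pair_mem_kleinPolar {a : Fin 6 → K} (ha : kleinQ a ≠ 0) :
    ∃ w ∈ kleinPolar (K ∙ a), ∃ z ∈ kleinPolar (K ∙ a),
      kleinQ w = 0 ∧ kleinQ z = 0 ∧ kleinB w z = 1 := by
  have ha₀ : a ≠ 0 := by rintro rfl; simp [kleinQ] at ha
  obtain ⟨w, hwa, hw₀, hQw⟩ := exists_isotropic_mem (S := kleinPolar (K ∙ a)) (by
    have := finrank_add_finrank_kleinPolar (K ∙ a)
    rw [finrank_span_singleton ha₀] at this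
    omega)
  have hw : w ∉ kleinPolar (kleinPolar (K ∙ a)) := by
    rw [kleinPolar_kleinPolar]
    rintro hw
    obtain ⟨c, rfl⟩ := mem_span_singleton.1 hw
    have : c = 0 := by simpa [kleinQ_smul, ha] using hQw
    simp [this] at hw₀
  obtain ⟨z₀, hz₀, hwz₀⟩ : ∃ z₀ ∈ kleinPolar (K ∙ a), kleinB z₀ w ≠ 0 := by
    by_contra! h
    exact hw h
  obtain ⟨z, hz, hwz⟩ : ∃ z ∈ kleinPolar (K ∙ a), kleinB w z = 1 := by
    refine ⟨(kleinB w z₀)⁻¹ • z₀, smul_mem _ _ hz₀, ?_⟩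
    rw [← kleinForm_apply, map_smul, smul_eq_mul, kleinForm_apply, kleinB_comm,
      inv_mul_cancel₀ hwz₀]
  refine ⟨w, hwa, z - kleinQ z • w, sub_mem hz (smul_mem _ _ hwa), hQw, ?_, ?_⟩
  · rw [kleinQ_sub_smul, hQw, kleinB_comm, hwz]
    ring
  · rw [← kleinForm_apply, map_sub, map_smul, kleinForm_apply, kleinForm_apply, hwz, kleinB_self,
      hQw]
    simp

lemma exists_isotropic_mem_kleinPolar_notMem {a b : Fin 6 → K} (ha : kleinQ a ≠ 0)
    (hb : b ∉ K ∙ a) : ∃ x, kleinQ x = 0 ∧ x ∈ kleinPolar (K ∙ a) ∧ x ∉ kleinPolar (K ∙ b) := by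
  by_contra! h
  obtain ⟨w, hw, z, hz, hQw, hQz, hwz⟩ := exists_hyperbolic_pair_mem_kleinPolar ha
  have := le_of_forall_isotropic_mem hw hz hQw hQz hwz fun x hx hQx => h x hQx hx
  rw [kleinPolar_le_kleinPolar_iff, span_singleton_le_iff_mem] at this
  exact hb this

lemma exists_isTangentHyperplane_mem_notMem {a b : Fin 6 → K} (ha : kleinQ a ≠ 0)
    (hb : b ∉ K ∙ a) : ∃ τ, IsTangentHyperplane τ ∧ a ∈ τ ∧ b ∉ τ := by
  obtain ⟨x, hQx, hxa, hxb⟩ := exists_isotropic_mem_kleinPolar_notMem ha hb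
  have hx₀ : x ≠ 0 := by rintro rfl; exact hxb (zero_mem _)
  refine ⟨kleinPolar (K ∙ x), ⟨x, hx₀, hQx, rfl⟩, ?_, ?_⟩ <;>
    rwa [mem_kleinPolar_span_singleton, kleinB_comm, ← mem_kleinPolar_span_singleton]

lemma exists_isTangentHyperplane_ge {S : Submodule K (Fin 6 → K)} (hS : finrank K S ≤ 2) :
    ∃ τ, IsTangentHyperplane τ ∧ S ≤ τ := by
  obtain ⟨x, hxS, hx₀, hQx⟩ := exists_isotropic_mem (S := kleinPolar S) (by
    have := finrank_add_finrank_kleinPolar S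
    omega)
  refine ⟨kleinPolar (K ∙ x), ⟨x, hx₀, hQx, rfl⟩, ?_⟩
  rwa [le_kleinPolar_comm, span_singleton_le_iff_mem]

lemma IsTangentHyperplane.finrank_eq {τ : Submodule K (Fin 6 → K)} (hτ : IsTangentHyperplane τ) :
    finrank K τ = 5 := by
  obtain ⟨x, hx₀, -, rfl⟩ := hτ
  have := finrank_add_finrank_kleinPolar (K ∙ x)
  rw [finrank_span_singleton hx₀] at this
  omega

lemma eq_bot_of_forall_le_isTangentHyperplane {S : Submodule K (Fin 6 → K)}
    (h : ∀ τ, IsTangentHyperplane τ → S ≤ τ) : S = ⊥ := by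
  refine (Submodule.eq_bot_iff _).2 fun s hs =>
    eq_zero_of_forall_isotropic_kleinB_eq_zero fun y hQy => ?_
  by_cases hy : y = 0
  · simp [hy, kleinB_apply]
  · exact mem_kleinPolar_span_singleton.1 (h _ ⟨y, hy, hQy, rfl⟩ hs)

lemma sup_span_singleton_mem_pencil {v κ : Submodule K (Fin 6 → K)} {c : Fin 6 → K}
    (hv : finrank K v = 1) (hvκ : v ≤ κ) (hc : c ∈ κ) (hcv : c ∉ v) : v ⊔ K ∙ c ∈ pencil v κ := by
  have hc₀ : c ≠ 0 := by rintro rfl; exact hcv (zero_mem _)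
  have hne : v ≠ K ∙ c := by rintro rfl; exact hcv (mem_span_singleton_self c)
  exact ⟨finrank_sup_eq_two hv (finrank_span_singleton hc₀) hne, le_sup_left,
    sup_le hvκ ((span_singleton_le_iff_mem _ _).2 hc)⟩

lemma exists_mem_pencil_le {v κ W : Submodule K (Fin 6 → K)} (hv : finrank K v = 1)
    (hvW : v ≤ W) (hW : 2 ≤ finrank K W) (hWκ : W ≤ κ) : ∃ G ∈ pencil v κ, G ≤ W := by
  obtain ⟨c, hcW, hcv⟩ :=
    SetLike.exists_of_lt (lt_of_le_of_ne hvW fun h => by rw [h] at hv; omega)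
  exact ⟨v ⊔ K ∙ c, sup_span_singleton_mem_pencil hv (hvW.trans hWκ) (hWκ hcW) hcv,
    sup_le hvW ((span_singleton_le_iff_mem _ _).2 hcW)⟩

lemma IsTangentHyperplane.exists_mem_pencil_le {τ v κ : Submodule K (Fin 6 → K)}
    (hτ : IsTangentHyperplane τ) (hv : finrank K v = 1) (hκ : finrank K κ = 3) (hvκ : v ≤ κ)
    (hvτ : v ≤ τ) : ∃ G ∈ pencil v κ, G ≤ τ := by
  have := finrank_add_finrank_le_finrank_inf_add κ τ
  rw [hτ.finrank_eq, hκ, finrank_fin_fun K] at this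
  obtain ⟨G, hG, hGκτ⟩ := _root_.exists_mem_pencil_le hv (le_inf hvκ hvτ) (by omega) inf_le_left
  exact ⟨G, hG, hGκτ.trans inf_le_right⟩

def IsPencilOf (H : Set (Submodule K (Fin 6 → K))) (v κ : Submodule K (Fin 6 → K)) : Prop :=
  finrank K v = 1 ∧ finrank K κ = 3 ∧ v ≤ κ ∧ pencil v κ ⊆ H

section HfdLineSet

variable {H : Set (Submodule K (Fin 6 → K))}

lemma isVertex_iff {v : Submodule K (Fin 6 → K)} : IsVertex H v ↔ ∃ κ, IsPencilOf H v κ := by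
  simp only [IsVertex, IsPencilOf, exists_and_left]

lemma isCarrier_iff {κ : Submodule K (Fin 6 → K)} : IsCarrier H κ ↔ ∃ v, IsPencilOf H v κ := by
  simp only [IsCarrier, IsPencilOf]
  constructor
  · rintro ⟨hκ, v, hv, hvκ, hH⟩
    exact ⟨v, hv, hκ, hvκ, hH⟩
  · rintro ⟨v, hv, hκ, hvκ, hH⟩
    exact ⟨hκ, v, hv, hvκ, hH⟩

lemma IsHfd.eq_of_le {τ G₁ G₂ : Submodule K (Fin 6 → K)} (hH : IsHfd H)
    (hτ : IsTangentHyperplane τ) (h₁ : G₁ ∈ H) (h₂ : G₂ ∈ H) (hG₁ : G₁ ≤ τ) (hG₂ : G₂ ≤ τ) :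
    G₁ = G₂ :=
  (hH.2 τ hτ).unique ⟨h₁, hG₁⟩ ⟨h₂, hG₂⟩

lemma IsHfd.not_le_of_isPencilOf {v κ τ : Submodule K (Fin 6 → K)} (hH : IsHfd H)
    (h : IsPencilOf H v κ) (hτ : IsTangentHyperplane τ) : ¬ κ ≤ τ := by
  obtain ⟨hv, hκ, hvκ, hpen⟩ := h
  intro hκτ
  -- two different lines of the pencil would lie in `τ`
  obtain ⟨G, hG, -⟩ := exists_mem_pencil_le hv hvκ (by omega) le_rfl
  obtain ⟨d, hdκ, hdG⟩ := SetLike.exists_of_lt (lt_of_le_of_ne hG.2.2 fun h => by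
    have := hG.1; rw [h] at this; omega)
  have hG' := sup_span_singleton_mem_pencil hv hvκ hdκ fun hdv => hdG (hG.2.1 hdv)
  have := hH.eq_of_le hτ (hpen hG') (hpen hG) (hG'.2.2.trans hκτ) (hG.2.2.trans hκτ)
  exact hdG (this ▸ mem_sup_right (mem_span_singleton_self d))

lemma IsHfd.le_of_isVertex_of_isCarrier {v κ : Submodule K (Fin 6 → K)} (hH : IsHfd H)
    (hv : IsVertex H v) (hκ : IsCarrier H κ) : v ≤ κ := by
  obtain ⟨κ₀, hv₁, hκ₀, hvκ₀, hpen₀⟩ := isVertex_iff.1 hv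
  obtain ⟨u, hu₁, hκ₃, huκ, hpen⟩ := isCarrier_iff.1 hκ
  obtain ⟨τ, hτ, hvuτ⟩ := exists_isTangentHyperplane_ge (S := v ⊔ u) (by
    have := Submodule.finrank_add_le_finrank_add_finrank v u
    omega)
  obtain ⟨G₁, hG₁, hG₁τ⟩ := hτ.exists_mem_pencil_le hv₁ hκ₀ hvκ₀ (le_sup_left.trans hvuτ)
  obtain ⟨G₂, hG₂, hG₂τ⟩ := hτ.exists_mem_pencil_le hu₁ hκ₃ huκ (le_sup_right.trans hvuτ)
  have := hH.eq_of_le hτ (hpen₀ hG₁) (hpen hG₂) hG₁τ hG₂τ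
  exact hG₁.2.1.trans (this ▸ hG₂.2.2)

lemma IsPencilledHfd.exists_isPencilOf_mem {G : Submodule K (Fin 6 → K)} (hH : IsPencilledHfd H)
    (hG : G ∈ H) : ∃ v κ, IsPencilOf H v κ ∧ G ∈ pencil v κ := by
  obtain ⟨v, κ, hv, hκ, hvκ, hpen, hG⟩ := hH.2 G hG
  exact ⟨v, κ, ⟨hv, hκ, hvκ, hpen⟩, hG⟩

lemma IsPencilledHfd.exists_isPencilOf_inf_mem {τ : Submodule K (Fin 6 → K)}
    (hH : IsPencilledHfd H) (hτ : IsTangentHyperplane τ) :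
    ∃ v κ, IsPencilOf H v κ ∧ v ≤ τ ∧ κ ⊓ τ ∈ H := by
  obtain ⟨G, ⟨hGH, hGτ⟩, -⟩ := hH.1.2 τ hτ
  obtain ⟨v, κ, hvκ, hG, hvG, hGκ⟩ := hH.exists_isPencilOf_mem hGH
  have := finrank_inf_lt_of_not_le (hH.1.not_le_of_isPencilOf hvκ hτ)
  have := hvκ.2.1
  have hGeq : G = κ ⊓ τ := eq_of_le_of_finrank_le (le_inf hGκ hGτ) (by omega)
  exact ⟨v, κ, hvκ, hvG.trans hGτ, hGeq ▸ hGH⟩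

lemma IsPencilledHfd.exists_isPencilOf (hH : IsPencilledHfd H) : ∃ v κ, IsPencilOf H v κ := by
  obtain ⟨τ, hτ, -⟩ :=
    exists_isTangentHyperplane_ge (S := (⊥ : Submodule K (Fin 6 → K))) (by simp)
  obtain ⟨v, κ, hvκ, -⟩ := hH.exists_isPencilOf_inf_mem hτ
  exact ⟨v, κ, hvκ⟩

lemma IsPencilledHfd.exists_isVertex_ne (hH : IsPencilledHfd H) (v : Submodule K (Fin 6 → K)) :
    ∃ u, IsVertex H u ∧ u ≠ v := by
  by_contra! h
  -- every tangent hyperplane would contain the only vertex `v`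
  have hv : v = ⊥ := eq_bot_of_forall_le_isTangentHyperplane fun τ hτ => by
    obtain ⟨u, κ, huκ, huτ, -⟩ := hH.exists_isPencilOf_inf_mem hτ
    exact h u (isVertex_iff.2 ⟨κ, huκ⟩) ▸ huτ
  obtain ⟨u, κ, huκ⟩ := hH.exists_isPencilOf
  have := huκ.1
  rw [h u (isVertex_iff.2 ⟨κ, huκ⟩), hv] at this
  simp at this

lemma IsPencilledHfd.isPencilOf_of_forall_isCarrier_eq {p κ : Submodule K (Fin 6 → K)}
    (hH : IsPencilledHfd H) (hp : finrank K p = 1) (hκ : IsCarrier H κ)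
    (huniq : ∀ κ', IsCarrier H κ' → κ' = κ) (hpκ : p ≤ κ) : IsPencilOf H p κ := by
  refine ⟨hp, hκ.1, hpκ, fun Y hY => ?_⟩
  obtain ⟨τ, hτ, hYτ⟩ := exists_isTangentHyperplane_ge hY.1.le
  obtain ⟨v, κ', hvκ', -, hκ'τ⟩ := hH.exists_isPencilOf_inf_mem hτ
  rw [huniq κ' (isCarrier_iff.2 ⟨v, hvκ'⟩)] at hκ'τ
  have := (hH.1.1 _ hκ'τ).1
  have := hY.1
  rwa [eq_of_le_of_finrank_le (le_inf hY.2.2 hYτ) (by omega)]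

lemma IsPencilledHfd.inf_mem_of_isCarrier_ne {κ₁ κ₂ : Submodule K (Fin 6 → K)}
    (hH : IsPencilledHfd H) (h₁ : IsCarrier H κ₁) (h₂ : IsCarrier H κ₂) (hne : κ₁ ≠ κ₂) :
    κ₁ ⊓ κ₂ ∈ H := by
  have := finrank_inf_lt_of_not_le fun h =>
    hne (eq_of_le_of_finrank_eq h (by rw [h₁.1, h₂.1]))
  have := h₁.1
  obtain ⟨u₁, κ, hu₁κ⟩ := hH.exists_isPencilOf
  have hu₁ : IsVertex H u₁ := isVertex_iff.2 ⟨κ, hu₁κ⟩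
  obtain ⟨u₂, hu₂, hu₂₁⟩ := hH.exists_isVertex_ne u₁
  have hvL {u} (hu : IsVertex H u) : u ≤ κ₁ ⊓ κ₂ :=
    le_inf (hH.1.le_of_isVertex_of_isCarrier hu h₁) (hH.1.le_of_isVertex_of_isCarrier hu h₂)
  have h2 := finrank_sup_eq_two hu₂.1 hu₁.1 hu₂₁
  have hL : u₂ ⊔ u₁ = κ₁ ⊓ κ₂ := eq_of_le_of_finrank_le (sup_le (hvL hu₂) (hvL hu₁)) (by omega)
  have hu₂κ := hH.1.le_of_isVertex_of_isCarrier hu₂ (isCarrier_iff.2 ⟨u₁, hu₁κ⟩)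
  exact hL ▸ hu₁κ.2.2.2 ⟨h2, le_sup_right, sup_le hu₂κ hu₁κ.2.2.1⟩

lemma IsPencilledHfd.isVertex_of_le_of_mem {L p : Submodule K (Fin 6 → K)}
    (hH : IsPencilledHfd H) (hL : L ∈ H) (hvL : ∀ v, IsVertex H v → v ≤ L)
    (hp : finrank K p = 1) (hpL : p ≤ L) : IsVertex H p := by
  obtain ⟨a, ha₀, rfl⟩ := exists_eq_span_singleton_of_finrank_eq_one hp
  have hQa : kleinQ a ≠ 0 := (hH.1.1 L hL).2 a (hpL (mem_span_singleton_self a)) ha₀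
  obtain ⟨b, hbL, hba⟩ := SetLike.exists_of_lt (lt_of_le_of_ne hpL fun h => by
    have := (hH.1.1 L hL).1; rw [← h] at this; omega)
  obtain ⟨τ, hτ, haτ, hbτ⟩ := exists_isTangentHyperplane_mem_notMem hQa hba
  obtain ⟨v, κ, hvκ, hvτ, -⟩ := hH.exists_isPencilOf_inf_mem hτ
  -- the vertex `v` and the point `K ∙ a` both lie in the point `L ⊓ τ`
  have := finrank_inf_lt_of_not_le fun h : L ≤ τ => hbτ (h hbL)
  have := (hH.1.1 L hL).1
  have hv : v = L ⊓ τ :=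
    eq_of_le_of_finrank_le (le_inf (hvL v (isVertex_iff.2 ⟨κ, hvκ⟩)) hvτ) (by rw [hvκ.1]; omega)
  have hp' : K ∙ a = L ⊓ τ :=
    eq_of_le_of_finrank_le (le_inf hpL ((span_singleton_le_iff_mem _ _).2 haτ)) (by omega)
  exact isVertex_iff.2 ⟨κ, hp' ▸ hv ▸ hvκ⟩

end HfdLineSet

end KleinQuadric

/-- Main Theorem, part (e).
A point `p` is a vertex of the pencilled hfd line set `H` if and only if `p` lies
in every carrier plane of `H`. -/
theorem vertices_eq_intersection_of_carriers {K : Type*} [Field K]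
    (H : Set (Submodule K (Fin 6 → K))) (hH : IsPencilledHfd H)
    (p : Submodule K (Fin 6 → K)) (hp : Module.finrank K p = 1) :
    IsVertex H p ↔ ∀ κ : Submodule K (Fin 6 → K), IsCarrier H κ → p ≤ κ := by
  refine ⟨fun hpH κ hκ => hH.1.le_of_isVertex_of_isCarrier hpH hκ, fun hall => ?_⟩
  by_cases hcar : ∃ κ₁ κ₂, IsCarrier H κ₁ ∧ IsCarrier H κ₂ ∧ κ₁ ≠ κ₂
  · obtain ⟨κ₁, κ₂, h₁, h₂, hne⟩ := hcar
    refine hH.isVertex_of_le_of_mem (hH.inf_mem_of_isCarrier_ne h₁ h₂ hne) (fun v hv => ?_) hp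
      (le_inf (hall κ₁ h₁) (hall κ₂ h₂))
    exact le_inf (hH.1.le_of_isVertex_of_isCarrier hv h₁) (hH.1.le_of_isVertex_of_isCarrier hv h₂)
  · obtain ⟨v, κ, hvκ⟩ := hH.exists_isPencilOf
    have hκ : IsCarrier H κ := isCarrier_iff.2 ⟨v, hvκ⟩
    exact isVertex_iff.2 ⟨κ, hH.isPencilOf_of_forall_isCarrier_eq hp hκ
      (fun κ' hκ' => by_contra fun hne => hcar ⟨κ', κ, hκ', hκ, hne⟩) (hall κ hκ)⟩
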